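/- Let k ∈ {5,6}, let G be a star k-critical subcubic simple graph, and let x be a vertex of G of degree 1 with neighbor y. Write N_G(y) = {x, y₁, y₂} with d_G(y₁) ≥ d_G(y₂). Then N_G(y) is an independent set in G, d_G(y₁) = 3, and d_G(y₂) ≥ k − 3. -/

import Mathlib

/-!
By criticality, some star `k`-edge-colouring of `G - x` extends to no colour on the pendant edge
`xy`. Since `x` is a leaf, a colour on `xy` is ruled out only by the colour of an edge `y yᵢ`, or
by the colour of an edge `yᵢ z` such that some edge at `z` repeats the colour of `y yᵢ` (a
bicoloured path `x y yᵢ z w`). All these colours are seen at `y₁` or `y₂`, so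
`k ≤ d(y₁) + d(y₂)`, whence `d(y₁) = 3` and `d(y₂) ≥ k - 3`. If `y₁ y₂` were an edge, its own
colour would have to be ruled out as well, which makes `y₁` and `y₂` share a second colour and
leaves at most `3 + 3 - 2 = 4 < k` colours.
-/

open SimpleGraph

/-- A star `k`-edge-coloring of `G`: a proper edge-coloring (adjacent edges get
distinct colors) such that no path or cycle of length four is bicolored, i.e.
no walk on four pairwise-distinct edges has its first and third edges equally
colored and its second and fourth edges equally colored. -/
def IsStarEdgeColoring {V : Type*} (G : SimpleGraph V) (k : ℕ)
    (c : Sym2 V → Fin k) : Prop :=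
  (∀ e₁ ∈ G.edgeSet, ∀ e₂ ∈ G.edgeSet, e₁ ≠ e₂ → (∃ v, v ∈ e₁ ∧ v ∈ e₂) →
      c e₁ ≠ c e₂) ∧
  (∀ v₀ v₁ v₂ v₃ v₄ : V, G.Adj v₀ v₁ → G.Adj v₁ v₂ → G.Adj v₂ v₃ → G.Adj v₃ v₄ →
    ([s(v₀, v₁), s(v₁, v₂), s(v₂, v₃), s(v₃, v₄)] : List (Sym2 V)).Pairwise (· ≠ ·) →
    ¬(c s(v₀, v₁) = c s(v₂, v₃) ∧ c s(v₁, v₂) = c s(v₃, v₄)))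

/-- `G` admits a star `k`-edge-coloring; equivalently, `χ'_s(G) ≤ k`. -/
def StarEdgeColorable {V : Type*} (G : SimpleGraph V) (k : ℕ) : Prop :=
  ∃ c : Sym2 V → Fin k, IsStarEdgeColoring G k c

/-- The graph `G - x` obtained from `G` by deleting the vertex `x`
(keeping the ambient vertex type; `x` becomes isolated, which does not affect
edge-colorings). -/
def SimpleGraph.deleteVert {V : Type*} (G : SimpleGraph V) (x : V) : SimpleGraph V where
  Adj u w := G.Adj u w ∧ u ≠ x ∧ w ≠ x
  symm := ⟨fun u w h => ⟨h.1.symm, h.2.2, h.2.1⟩⟩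
  loopless := ⟨fun u h => G.loopless.irrefl u h.1⟩

/-- `G` is star `k`-critical: `χ'_s(G) > k` but `χ'_s(G - v) ≤ k` for every vertex `v`. -/
def StarCritical {V : Type*} (G : SimpleGraph V) (k : ℕ) : Prop :=
  ¬ StarEdgeColorable G k ∧ ∀ v : V, StarEdgeColorable (G.deleteVert v) k

/-- The set of colors used by `c` on edges of `H` incident with `u`. -/
def colorsAt {V : Type*} (H : SimpleGraph V) {k : ℕ} (c : Sym2 V → Fin k) (u : V) :
    Set (Fin k) :=
  {a | ∃ w, H.Adj u w ∧ c s(u, w) = a}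

section

variable {V : Type*} {k : ℕ}

/-- The colours a star colouring `c` of `H` forbids on a new pendant edge at `y`, on account of
the neighbour `u` of `y`. -/
def leafBlockedColors (H : SimpleGraph V) (c : Sym2 V → Fin k) (y u : V) : Set (Fin k) :=
  insert (c s(y, u)) {b | ∃ z, H.Adj u z ∧ c s(y, u) ∈ colorsAt H c z ∧ c s(u, z) = b}

section Coloring

variable {H : SimpleGraph V} {c : Sym2 V → Fin k}

lemma IsStarEdgeColoring.ne_of_adj (hc : IsStarEdgeColoring H k c) {u v w : V}
    (huv : H.Adj u v) (huw : H.Adj u w) (hvw : v ≠ w) : c s(u, v) ≠ c s(u, w) :=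
  hc.1 _ huv _ huw (Sym2.congr_right.not.mpr hvw) ⟨u, Sym2.mem_mk_left u v, Sym2.mem_mk_left u w⟩

lemma ncard_colorsAt_le {G : SimpleGraph V} (hHG : H ≤ G) (c : Sym2 V → Fin k) (u : V)
    [Fintype (G.neighborSet u)] : (colorsAt H c u).ncard ≤ G.degree u := by
  have hsub : colorsAt H c u ⊆ (fun w => c s(u, w)) '' G.neighborSet u := by
    rintro _ ⟨w, huw, rfl⟩
    exact ⟨w, hHG huw, rfl⟩
  calc (colorsAt H c u).ncard ≤ ((fun w => c s(u, w)) '' G.neighborSet u).ncard :=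
        Set.ncard_le_ncard hsub
    _ ≤ (G.neighborSet u).ncard := Set.ncard_image_le
    _ = G.degree u := by rw [Set.ncard_eq_toFinset_card']; rfl

lemma leafBlockedColors_subset_colorsAt {y u : V} (hyu : H.Adj y u) :
    leafBlockedColors H c y u ⊆ colorsAt H c u := by
  rintro b (rfl | ⟨z, huz, -, rfl⟩)
  · exact ⟨y, hyu.symm, congrArg c Sym2.eq_swap⟩
  · exact ⟨z, huz, rfl⟩

/-- If the colour of `uv` is forbidden on account of `u`, properness at `u` forces the witness
edge to be `uv` itself, so the colour of `yu` reappears at `v`. -/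
lemma two_le_ncard_colorsAt_inter (hc : IsStarEdgeColoring H k c) {y u v : V}
    (hyu : H.Adj y u) (huv : H.Adj u v) (hvy : v ≠ y)
    (hb : c s(u, v) ∈ leafBlockedColors H c y u) :
    2 ≤ (colorsAt H c u ∩ colorsAt H c v).ncard := by
  have hne : c s(u, v) ≠ c s(y, u) := by
    rw [Sym2.eq_swap (a := y)]
    exact hc.ne_of_adj huv hyu.symm hvy
  obtain ⟨z, huz, hyuz, hcz⟩ := (Set.mem_insert_iff.mp hb).resolve_left hne
  obtain rfl : z = v := by
    by_contra h
    exact hc.ne_of_adj huz huv h hcz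
  have hpair : {c s(u, z), c s(y, u)} ⊆ colorsAt H c u ∩ colorsAt H c z :=
    Set.insert_subset ⟨⟨z, huz, rfl⟩, ⟨u, huz.symm, congrArg c Sym2.eq_swap⟩⟩
      (Set.singleton_subset_iff.mpr ⟨⟨y, hyu.symm, congrArg c Sym2.eq_swap⟩, hyuz⟩)
  exact (Set.ncard_pair hne).symm.le.trans (Set.ncard_le_ncard hpair)

lemma two_le_ncard_colorsAt_inter_of_mem_union (hc : IsStarEdgeColoring H k c) {y u v : V}
    (hyu : H.Adj y u) (hyv : H.Adj y v) (huv : H.Adj u v)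
    (hb : c s(u, v) ∈ leafBlockedColors H c y u ∪ leafBlockedColors H c y v) :
    2 ≤ (colorsAt H c u ∩ colorsAt H c v).ncard := by
  rcases hb with hb | hb
  · exact two_le_ncard_colorsAt_inter hc hyu huv hyv.ne' hb
  · rw [Sym2.eq_swap] at hb
    rw [Set.inter_comm]
    exact two_le_ncard_colorsAt_inter hc hyv huv.symm hyu.ne' hb

lemma mem_colorsAt_union_of_exists_mem_leafBlockedColors {y y₁ y₂ : V} {a : Fin k}
    (hnbr : ∀ u, H.Adj y u → u = y₁ ∨ u = y₂)
    (ha : ∃ u, H.Adj y u ∧ a ∈ leafBlockedColors H c y u) :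
    a ∈ colorsAt H c y₁ ∪ colorsAt H c y₂ := by
  obtain ⟨u, hyu, ha⟩ := ha
  rcases hnbr u hyu with rfl | rfl
  exacts [Or.inl (leafBlockedColors_subset_colorsAt hyu ha),
    Or.inr (leafBlockedColors_subset_colorsAt hyu ha)]

lemma card_add_ncard_inter_colorsAt_le {G : SimpleGraph V} (hHG : H ≤ G) {u v : V}
    [Fintype (G.neighborSet u)] [Fintype (G.neighborSet v)]
    (hcover : ∀ a, a ∈ colorsAt H c u ∪ colorsAt H c v) :
    k + (colorsAt H c u ∩ colorsAt H c v).ncard ≤ G.degree u + G.degree v := by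
  have hk : k ≤ (colorsAt H c u ∪ colorsAt H c v).ncard := by
    simpa using Set.ncard_le_ncard (fun a _ => hcover a : Set.univ ⊆ _)
  have := Set.ncard_union_add_ncard_inter (colorsAt H c u) (colorsAt H c v)
  have := ncard_colorsAt_le hHG c u
  have := ncard_colorsAt_le hHG c v
  omega

end Coloring

lemma deleteVert_le (G : SimpleGraph V) (x : V) : G.deleteVert x ≤ G := fun _ _ h => h.1

section PendantEdge

variable {G : SimpleGraph V} {c : Sym2 V → Fin k} {x y : V}

lemma deleteVert_adj_of_ne_leaf_edge (hleaf : ∀ z, G.Adj x z → z = y) {u v : V}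
    (huv : G.Adj u v) (hne : s(u, v) ≠ s(x, y)) : (G.deleteVert x).Adj u v := by
  refine ⟨huv, ?_, ?_⟩
  · rintro rfl
    exact hne (by rw [hleaf v huv])
  · rintro rfl
    exact hne (by rw [hleaf u huv.symm, Sym2.eq_swap])

lemma leaf_edge_orientation (hleaf : ∀ z, G.Adj x z → z = y) {u v w : V} (hvw : G.Adj v w)
    (h : s(u, v) = s(x, y)) (hne : s(u, v) ≠ s(v, w)) : u = x ∧ v = y := by
  rcases Sym2.eq_iff.mp h with ⟨rfl, rfl⟩ | ⟨rfl, rfl⟩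
  · exact ⟨rfl, rfl⟩
  · obtain rfl := hleaf w hvw
    exact absurd Sym2.eq_swap hne

lemma not_bicolored_from_leaf_edge (hleaf : ∀ z, G.Adj x z → z = y) {a : Fin k}
    (ha : ∀ u, (G.deleteVert x).Adj y u → a ∉ leafBlockedColors (G.deleteVert x) c y u)
    {u z w : V} (hyu : G.Adj y u) (huz : G.Adj u z)
    (hzw : G.Adj z w) (hyu' : s(y, u) ≠ s(x, y)) (huz' : s(u, z) ≠ s(x, y))
    (hzw' : s(z, w) ≠ s(x, y)) (h₁ : a = c s(u, z)) (h₂ : c s(y, u) = c s(z, w)) : False :=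
  ha u (deleteVert_adj_of_ne_leaf_edge hleaf hyu hyu') <| Set.mem_insert_of_mem _
    ⟨z, deleteVert_adj_of_ne_leaf_edge hleaf huz huz',
      ⟨w, deleteVert_adj_of_ne_leaf_edge hleaf hzw hzw', h₂.symm⟩, h₁.symm⟩

lemma mem_edgeSet_deleteVert_of_ne_leaf_edge (hleaf : ∀ z, G.Adj x z → z = y) {e : Sym2 V}
    (he : e ∈ G.edgeSet) (hne : e ≠ s(x, y)) : e ∈ (G.deleteVert x).edgeSet := by
  induction e using Sym2.ind with
  | _ u v => exact deleteVert_adj_of_ne_leaf_edge hleaf he hne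

lemma ne_leaf_edge_of_adj_of_adj (hleaf : ∀ z, G.Adj x z → z = y) {t u v w : V}
    (htu : G.Adj t u) (hvw : G.Adj v w) (hne₁ : s(t, u) ≠ s(u, v)) (hne₂ : s(u, v) ≠ s(v, w)) :
    s(u, v) ≠ s(x, y) := by
  intro h
  obtain ⟨rfl, rfl⟩ := leaf_edge_orientation hleaf hvw h hne₂
  exact hne₁ (by rw [hleaf t htu.symm, Sym2.eq_swap])

lemma apply_ne_of_mem_leaf_edge {a : Fin k}
    (ha : ∀ u, (G.deleteVert x).Adj y u → a ∉ leafBlockedColors (G.deleteVert x) c y u)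
    {e : Sym2 V} (he : e ∈ (G.deleteVert x).edgeSet) {v : V} (hv : v ∈ s(x, y)) (hve : v ∈ e) :
    c e ≠ a := by
  induction e using Sym2.ind with
  | _ u w =>
    have hblock : ∀ t, (G.deleteVert x).Adj y t → c s(y, t) ≠ a := fun t ht h =>
      ha t ht (h ▸ Set.mem_insert _ _)
    rcases Sym2.mem_iff.mp hv with rfl | rfl <;> rcases Sym2.mem_iff.mp hve with rfl | rfl
    · exact (he.2.1 rfl).elim
    · exact (he.2.2 rfl).elim
    · exact hblock w he
    · rw [Sym2.eq_swap]
      exact hblock u he.symm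

lemma not_bicolored_update_leaf_edge [DecidableEq V] (hleaf : ∀ z, G.Adj x z → z = y) {a : Fin k}
    (hc : IsStarEdgeColoring (G.deleteVert x) k c)
    (ha : ∀ u, (G.deleteVert x).Adj y u → a ∉ leafBlockedColors (G.deleteVert x) c y u)
    {v₀ v₁ v₂ v₃ v₄ : V} (h₀₁ : G.Adj v₀ v₁) (h₁₂ : G.Adj v₁ v₂) (h₂₃ : G.Adj v₂ v₃)
    (h₃₄ : G.Adj v₃ v₄)
    (hpw : ([s(v₀, v₁), s(v₁, v₂), s(v₂, v₃), s(v₃, v₄)] : List (Sym2 V)).Pairwise (· ≠ ·)) :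
    ¬(Function.update c s(x, y) a s(v₀, v₁) = Function.update c s(x, y) a s(v₂, v₃) ∧
      Function.update c s(x, y) a s(v₁, v₂) = Function.update c s(x, y) a s(v₃, v₄)) := by
  intro hbi
  have hpw' := hpw
  simp only [List.pairwise_cons, List.mem_cons, List.not_mem_nil, forall_eq_or_imp, forall_eq,
    List.Pairwise.nil, or_false, IsEmpty.forall_iff, implies_true, and_true] at hpw
  obtain ⟨⟨n₀₁₂, n₀₂₃, n₀₃₄⟩, ⟨n₁₂₃, n₁₃₄⟩, n₂₃₄⟩ := hpw
  by_cases hfirst : s(v₀, v₁) = s(x, y)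
  · obtain ⟨rfl, rfl⟩ := leaf_edge_orientation hleaf h₁₂ hfirst n₀₁₂
    rw [Function.update_self, Function.update_of_ne n₀₁₂.symm, Function.update_of_ne n₀₂₃.symm,
      Function.update_of_ne n₀₃₄.symm] at hbi
    exact not_bicolored_from_leaf_edge hleaf ha h₁₂ h₂₃ h₃₄ n₀₁₂.symm n₀₂₃.symm n₀₃₄.symm
      hbi.1 hbi.2
  by_cases hlast : s(v₃, v₄) = s(x, y)
  · obtain ⟨rfl, rfl⟩ := leaf_edge_orientation hleaf h₂₃.symm (Sym2.eq_swap.trans hlast)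
      (by rw [Sym2.eq_swap (a := v₄), Sym2.eq_swap (a := v₃) (b := v₂)]; exact n₂₃₄.symm)
    rw [hlast, Function.update_self, Function.update_of_ne hfirst,
      Function.update_of_ne (ne_of_ne_of_eq n₁₃₄ hlast), Function.update_of_ne
      (ne_of_ne_of_eq n₂₃₄ hlast)] at hbi
    exact not_bicolored_from_leaf_edge hleaf ha h₂₃.symm h₁₂.symm h₀₁.symm
      (by rwa [Sym2.eq_swap, ← hlast]) (by rwa [Sym2.eq_swap, ← hlast])
      (by rwa [Sym2.eq_swap]) (by rw [← hbi.2, Sym2.eq_swap])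
      (by rw [Sym2.eq_swap, ← hbi.1, Sym2.eq_swap])
  have hmid₁ := ne_leaf_edge_of_adj_of_adj hleaf h₀₁ h₂₃ n₀₁₂ n₁₂₃
  have hmid₂ := ne_leaf_edge_of_adj_of_adj hleaf h₁₂ h₃₄ n₁₂₃ n₂₃₄
  rw [Function.update_of_ne hfirst, Function.update_of_ne hmid₁, Function.update_of_ne hmid₂,
    Function.update_of_ne hlast] at hbi
  exact hc.2 v₀ v₁ v₂ v₃ v₄ (deleteVert_adj_of_ne_leaf_edge hleaf h₀₁ hfirst)
    (deleteVert_adj_of_ne_leaf_edge hleaf h₁₂ hmid₁)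
    (deleteVert_adj_of_ne_leaf_edge hleaf h₂₃ hmid₂)
    (deleteVert_adj_of_ne_leaf_edge hleaf h₃₄ hlast) hpw' hbi

lemma isStarEdgeColoring_update_leaf_edge [DecidableEq V] (hleaf : ∀ z, G.Adj x z → z = y)
    {a : Fin k} (hc : IsStarEdgeColoring (G.deleteVert x) k c)
    (ha : ∀ u, (G.deleteVert x).Adj y u → a ∉ leafBlockedColors (G.deleteVert x) c y u) :
    IsStarEdgeColoring G k (Function.update c s(x, y) a) := by
  refine ⟨fun e₁ he₁ e₂ he₂ hne ⟨v, hv₁, hv₂⟩ => ?_,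
    fun _ _ _ _ _ h₀₁ h₁₂ h₂₃ h₃₄ hpw =>
      not_bicolored_update_leaf_edge hleaf hc ha h₀₁ h₁₂ h₂₃ h₃₄ hpw⟩
  have hH := fun {e} => mem_edgeSet_deleteVert_of_ne_leaf_edge (e := e) hleaf
  by_cases h₁ : e₁ = s(x, y) <;> by_cases h₂ : e₂ = s(x, y)
  · exact (hne (h₁.trans h₂.symm)).elim
  · subst h₁
    rw [Function.update_self, Function.update_of_ne h₂]
    exact (apply_ne_of_mem_leaf_edge ha (hH he₂ h₂) hv₁ hv₂).symm
  · subst h₂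
    rw [Function.update_self, Function.update_of_ne h₁]
    exact apply_ne_of_mem_leaf_edge ha (hH he₁ h₁) hv₂ hv₁
  · rw [Function.update_of_ne h₁, Function.update_of_ne h₂]
    exact hc.1 e₁ (hH he₁ h₁) e₂ (hH he₂ h₂) hne ⟨v, hv₁, hv₂⟩

lemma StarCritical.exists_coloring_forall_mem_leafBlockedColors (hcrit : StarCritical G k)
    (hleaf : ∀ z, G.Adj x z → z = y) :
    ∃ c : Sym2 V → Fin k, IsStarEdgeColoring (G.deleteVert x) k c ∧
      ∀ a, ∃ u, (G.deleteVert x).Adj y u ∧ a ∈ leafBlockedColors (G.deleteVert x) c y u := by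
  classical
  obtain ⟨c, hc⟩ := hcrit.2 x
  refine ⟨c, hc, fun a => ?_⟩
  by_contra! ha
  exact hcrit.1 ⟨_, isStarEdgeColoring_update_leaf_edge hleaf hc ha⟩

lemma neighborSet_pairwise_not_adj_of_leaf (hleaf : ∀ z, G.Adj x z → z = y) {y₁ y₂ : V}
    (hN : G.neighborSet y = {x, y₁, y₂}) (h : ¬ G.Adj y₁ y₂) :
    ∀ u ∈ G.neighborSet y, ∀ w ∈ G.neighborSet y, ¬ G.Adj u w := by
  intro u hu w hw huw
  have hxw : ∀ w ∈ G.neighborSet y, ¬ G.Adj x w := fun w hw h => hw.ne (hleaf w h).symm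
  have hux : u ≠ x := fun h => hxw w hw (h ▸ huw)
  have hwx : w ≠ x := fun h => hxw u hu (h ▸ huw.symm)
  rw [hN] at hu hw
  rcases hu.resolve_left hux with rfl | rfl <;> rcases hw.resolve_left hwx with rfl | rfl
  exacts [huw.ne rfl, h huw, h huw.symm, huw.ne rfl]

end PendantEdge

end

theorem lemma1b_general {V : Type*} [Fintype V] (G : SimpleGraph V)
    [DecidableRel G.Adj] (hsub : ∀ v : V, G.degree v ≤ 3)
    (k : ℕ) (hk : k = 5 ∨ k = 6) (hcrit : StarCritical G k)
    (x y y₁ y₂ : V) (hx : G.degree x = 1) (hxy : G.Adj x y)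
    (hN : G.neighborSet y = {x, y₁, y₂})
    (hdeg : G.degree y₂ ≤ G.degree y₁) :
    (∀ u ∈ G.neighborSet y, ∀ w ∈ G.neighborSet y, ¬ G.Adj u w) ∧
      G.degree y₁ = 3 ∧ k - 3 ≤ G.degree y₂ := by
  have hleaf : ∀ z, G.Adj x z → z = y := fun z hz =>
    (degree_eq_one_iff_existsUnique_adj.mp hx).unique hz hxy
  obtain ⟨c, hc, hblocked⟩ := hcrit.exists_coloring_forall_mem_leafBlockedColors hleaf
  have hy₁ : G.Adj y y₁ := show y₁ ∈ G.neighborSet y by simp [hN]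
  have hy₂ : G.Adj y y₂ := show y₂ ∈ G.neighborSet y by simp [hN]
  have hnbr : ∀ u, (G.deleteVert x).Adj y u → u = y₁ ∨ u = y₂ := by
    intro u hu
    have hu' : u ∈ G.neighborSet y := hu.1
    rw [hN] at hu'
    exact hu'.resolve_left hu.2.2
  have hcount := card_add_ncard_inter_colorsAt_le (deleteVert_le G x) fun a =>
    mem_colorsAt_union_of_exists_mem_leafBlockedColors hnbr (hblocked a)
  have := hsub y₁
  have := hsub y₂
  have hy₁y₂ : ¬ G.Adj y₁ y₂ := by
    intro h
    have hy₁x : y₁ ≠ x := fun h₁ => hy₂.ne (hleaf y₂ (h₁ ▸ h)).symm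
    have hy₂x : y₂ ≠ x := fun h₂ => hy₁.ne (hleaf y₁ (h₂ ▸ h.symm)).symm
    obtain ⟨u, hyu, hb⟩ := hblocked (c s(y₁, y₂))
    have hshared := two_le_ncard_colorsAt_inter_of_mem_union hc ⟨hy₁, hxy.ne', hy₁x⟩
      ⟨hy₂, hxy.ne', hy₂x⟩ ⟨h, hy₁x, hy₂x⟩ (by rcases hnbr u hyu with rfl | rfl <;> simp [hb])
    omega
  exact ⟨neighborSet_pairwise_not_adj_of_leaf hleaf hN hy₁y₂, by omega, by omega⟩

/-- Lemma 1(b): with `N_G(y) = {x, y₁, y₂}` and `d(y₁) ≥ d(y₂)`, the set `N_G(y)` is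
independent, `d(y₁) = 3`, and `d(y₂) ≥ k - 3`. -/
theorem lemma1b {V : Type*} [Fintype V] [DecidableEq V] (G : SimpleGraph V)
    [DecidableRel G.Adj] (hsub : ∀ v : V, G.degree v ≤ 3)
    (k : ℕ) (hk : k = 5 ∨ k = 6) (hcrit : StarCritical G k)
    (x y y₁ y₂ : V) (hx : G.degree x = 1) (hxy : G.Adj x y)
    (hxy₁ : x ≠ y₁) (hxy₂ : x ≠ y₂) (hy₁y₂ : y₁ ≠ y₂)
    (hN : G.neighborSet y = {x, y₁, y₂})
    (hdeg : G.degree y₂ ≤ G.degree y₁) :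
    (∀ u ∈ G.neighborSet y, ∀ w ∈ G.neighborSet y, ¬ G.Adj u w) ∧
      G.degree y₁ = 3 ∧ k - 3 ≤ G.degree y₂ :=
  lemma1b_general G hsub k hk hcrit x y y₁ y₂ hx hxy hN hdeg
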